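/- The augmented IPW functional is doubly robust at the population level: if either m̄₁ = m₁ (the true outcome regression E[Y|T=1,X]) or ē = e (the true propensity score P(T=1|X)), then E[ T·Y/ē(X) − (T − ē(X))·m̄₁(X)/ē(X) ] = E[Y(1)], provided ē(X) ≥ c > 0 almost surely and relevant integrability holds. -/

import Mathlib

/-!
Conditioning on `𝒢` first, the outcome and weight models can be pulled out of the conditional
expectation, so the AIPW integrand has conditional mean `(E[TY|𝒢] - (e - ē) m̄₁) / ē`, with
`e = E[T|𝒢]`. By `E[TY|𝒢] = m₁ e` this is `m₁ + (e - ē)(m₁ - m̄₁) / ē`, and the product of the two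
errors vanishes as soon as one of the models is correct. Finally, unconfoundedness gives
`E[TY₁|𝒢] = e · E[Y₁|𝒢]`, and `e > 0` identifies `m₁` with `E[Y₁|𝒢]`, whose mean is `E[Y₁]`.
-/

open MeasureTheory ProbabilityTheory

namespace MeasureTheory

variable {Ω : Type*} {m mΩ : MeasurableSpace Ω} {μ : Measure Ω}

theorem integrable_of_le_condExp [NeZero μ] {f : Ω → ℝ} {c : ℝ} (hc : 0 < c)
    (h : ∀ᵐ ω ∂μ, c ≤ μ[f | m] ω) : Integrable f μ := by
  by_contra hf
  obtain ⟨ω, hω⟩ := h.exists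
  rw [condExp_of_not_integrable hf, Pi.zero_apply] at hω
  linarith

end MeasureTheory

namespace ProbabilityTheory

variable {Ω : Type*} {m' mΩ : MeasurableSpace Ω} [StandardBorelSpace Ω]
  {μ : Measure Ω} [IsFiniteMeasure μ]

theorem ae_ae_condExpKernel_of_ae (hm' : m' ≤ mΩ) {p : Ω → Prop} (h : ∀ᵐ ω ∂μ, p ω) :
    ∀ᵐ ω ∂μ.trim hm', ∀ᵐ ω' ∂condExpKernel μ m' ω, p ω' :=
  Measure.ae_ae_of_ae_comp (by rwa [condExpKernel_comp_trim])

variable {hm' : m' ≤ mΩ}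

theorem CondIndepFun.congr_ae {β γ : Type*} [MeasurableSpace β] [MeasurableSpace γ]
    {f f' : Ω → β} {g g' : Ω → γ} (hfg : CondIndepFun m' hm' f g μ)
    (hf : f =ᵐ[μ] f') (hg : g =ᵐ[μ] g') : CondIndepFun m' hm' f' g' μ :=
  Kernel.IndepFun.congr' hfg (ae_ae_condExpKernel_of_ae hm' hf) (ae_ae_condExpKernel_of_ae hm' hg)

theorem CondIndepFun.ae_indepFun_condExpKernel {f g : Ω → ℝ} (hfg : CondIndepFun m' hm' f g μ)
    (hf : Measurable f) (hg : Measurable g) :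
    ∀ᵐ ω ∂μ.trim hm', IndepFun f g (condExpKernel μ m' ω) := by
  filter_upwards [(condIndepFun_iff_map_prod_eq_prod_map_map hf hg).1 hfg] with ω hω
  rw [indepFun_iff_map_prod_eq_prod_map_map hf.aemeasurable hg.aemeasurable]
  simpa [Kernel.map_apply _ (hf.prodMk hg), Kernel.map_apply _ hf, Kernel.map_apply _ hg,
    Kernel.prod_apply] using hω

theorem CondIndepFun.condExp_mul_of_measurable {f g : Ω → ℝ} (hfg : CondIndepFun m' hm' f g μ)
    (hf : Measurable f) (hg : Measurable g) (hfi : Integrable f μ) (hgi : Integrable g μ)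
    (hfgi : Integrable (f * g) μ) :
    μ[f * g | m'] =ᵐ[μ] μ[f | m'] * μ[g | m'] := by
  filter_upwards [condExp_ae_eq_integral_condExpKernel hm' hfgi,
    condExp_ae_eq_integral_condExpKernel hm' hfi, condExp_ae_eq_integral_condExpKernel hm' hgi,
    ae_of_ae_trim hm' (hfg.ae_indepFun_condExpKernel hf hg)] with ω hfgω hfω hgω hindep
  rw [hfgω, Pi.mul_apply, hfω, hgω]
  exact hindep.integral_mul_eq_mul_integral hf.aestronglyMeasurable hg.aestronglyMeasurable

theorem CondIndepFun.condExp_mul {f g : Ω → ℝ} (hfg : CondIndepFun m' hm' f g μ)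
    (hf : Integrable f μ) (hg : Integrable g μ) (hfg_int : Integrable (f * g) μ) :
    μ[f * g | m'] =ᵐ[μ] μ[f | m'] * μ[g | m'] := by
  have hf_mk := hf.1.ae_eq_mk
  have hg_mk := hg.1.ae_eq_mk
  have hmul_mk : f * g =ᵐ[μ] hf.1.mk f * hg.1.mk g := hf_mk.mul hg_mk
  calc μ[f * g | m'] =ᵐ[μ] μ[hf.1.mk f * hg.1.mk g | m'] := condExp_congr_ae hmul_mk
    _ =ᵐ[μ] μ[hf.1.mk f | m'] * μ[hg.1.mk g | m'] :=
      (hfg.congr_ae hf_mk hg_mk).condExp_mul_of_measurable hf.1.stronglyMeasurable_mk.measurable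
        hg.1.stronglyMeasurable_mk.measurable ((integrable_congr hf_mk).1 hf)
        ((integrable_congr hg_mk).1 hg) ((integrable_congr hmul_mk).1 hfg_int)
    _ =ᵐ[μ] μ[f | m'] * μ[g | m'] :=
      (condExp_congr_ae hf_mk.symm).mul (condExp_congr_ae hg_mk.symm)

theorem CondIndepFun.ae_eq_condExp_of_condExp_mul {Y T m₁ : Ω → ℝ}
    (hYT : CondIndepFun m' hm' Y T μ) (hY : Integrable Y μ) (hT : Integrable T μ)
    (hTY : Integrable (fun ω => T ω * Y ω) μ) (he : ∀ᵐ ω ∂μ, μ[T | m'] ω ≠ 0)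
    (hm₁ : μ[fun ω => T ω * Y ω | m'] =ᵐ[μ] fun ω => m₁ ω * μ[T | m'] ω) :
    m₁ =ᵐ[μ] μ[Y | m'] := by
  have hcomm : (fun ω => T ω * Y ω) = Y * T := funext fun ω => mul_comm _ _
  rw [hcomm] at hTY hm₁
  filter_upwards [hm₁, hYT.condExp_mul hY hT hTY, he] with ω h₁ h₂ hω
  exact mul_right_cancel₀ hω (h₁.symm.trans h₂)

end ProbabilityTheory

theorem condExp_aipw {Ω : Type*} {m mΩ : MeasurableSpace Ω} {μ : Measure Ω} (hm : m ≤ mΩ)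
    [IsFiniteMeasure μ] {Z W mbar ebar : Ω → ℝ} {C c : ℝ} (hc : 0 < c)
    (hZ : Integrable Z μ) (hW : Integrable W μ) (hW_bdd : ∀ᵐ ω ∂μ, ‖W ω‖ ≤ C)
    (hmbar : StronglyMeasurable[m] mbar) (hmbar_int : Integrable mbar μ)
    (hebar : StronglyMeasurable[m] ebar) (hebar_ge : ∀ᵐ ω ∂μ, c ≤ ebar ω) :
    μ[fun ω => Z ω / ebar ω - (W ω - ebar ω) * mbar ω / ebar ω | m]
      =ᵐ[μ] fun ω => (μ[Z | m] ω - (μ[W | m] ω - ebar ω) * mbar ω) / ebar ω := by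
  have hinv : StronglyMeasurable[m] ebar⁻¹ := hebar.measurable.inv.stronglyMeasurable
  have hinv_bdd : ∀ᵐ ω ∂μ, ‖ebar⁻¹ ω‖ ≤ c⁻¹ := by
    filter_upwards [hebar_ge] with ω hω
    rw [Pi.inv_apply, norm_inv, Real.norm_of_nonneg (hc.le.trans hω)]
    exact inv_anti₀ hc hω
  have hZ' : Integrable (ebar⁻¹ * Z) μ := hZ.bdd_mul (hinv.mono hm).aestronglyMeasurable hinv_bdd
  have hmbar' : Integrable (ebar⁻¹ * mbar) μ :=
    hmbar_int.bdd_mul (hinv.mono hm).aestronglyMeasurable hinv_bdd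
  have hW' : Integrable (ebar⁻¹ * mbar * W) μ := hmbar'.mul_bdd hW.1 hW_bdd
  have hsplit : (fun ω => Z ω / ebar ω - (W ω - ebar ω) * mbar ω / ebar ω)
      =ᵐ[μ] ebar⁻¹ * Z - ebar⁻¹ * mbar * W + mbar := by
    filter_upwards [hebar_ge] with ω hω
    have : ebar ω ≠ 0 := (hc.trans_le hω).ne'
    simp only [Pi.add_apply, Pi.sub_apply, Pi.mul_apply, Pi.inv_apply]
    field_simp
    ring
  filter_upwards [condExp_congr_ae (m := m) hsplit, condExp_add (hZ'.sub hW') hmbar_int m,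
    condExp_sub hZ' hW' m, condExp_mul_of_stronglyMeasurable_left hinv hZ' hZ,
    condExp_mul_of_stronglyMeasurable_left (hinv.mul hmbar) hW' hW, hebar_ge]
    with ω h₁ h₂ h₃ h₄ h₅ hω
  have : ebar ω ≠ 0 := (hc.trans_le hω).ne'
  rw [h₁, h₂, Pi.add_apply, h₃, Pi.sub_apply, h₄, h₅,
    condExp_of_stronglyMeasurable hm hmbar hmbar_int]
  simp only [Pi.mul_apply, Pi.inv_apply]
  field_simp
  ring

theorem aipw_eq_of_or {m e mbar ebar : ℝ} (hebar : ebar ≠ 0) (h : mbar = m ∨ ebar = e) :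
    (m * e - (e - ebar) * mbar) / ebar = m := by
  rcases h with rfl | rfl <;> field_simp <;> ring

theorem stmt_5_general {Ω : Type*} {mΩ : MeasurableSpace Ω} [StandardBorelSpace Ω]
    (μ : Measure Ω) [IsProbabilityMeasure μ]
    (𝒢 : MeasurableSpace Ω) (h𝒢 : 𝒢 ≤ mΩ)
    (Y1 Y0 T Y m1 m1bar ebar : Ω → ℝ) (c : ℝ) (hc : 0 < c)
    (hTbin : ∀ ω, T ω = 0 ∨ T ω = 1)
    (hcons : ∀ ω, Y ω = T ω * Y1 ω + (1 - T ω) * Y0 ω)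
    (hunconf : CondIndepFun 𝒢 h𝒢 Y1 T μ)
    (he_pos : ∀ᵐ ω ∂μ, c ≤ (μ[T | 𝒢]) ω)
    (hm1 : μ[fun ω => T ω * Y ω | 𝒢] =ᵐ[μ] fun ω => m1 ω * (μ[T | 𝒢]) ω)
    (hm1bar_meas : StronglyMeasurable[𝒢] m1bar)
    (hebar_meas : StronglyMeasurable[𝒢] ebar)
    (hebar_pos : ∀ᵐ ω ∂μ, c ≤ ebar ω)
    (hDR : (m1bar =ᵐ[μ] m1) ∨ (ebar =ᵐ[μ] fun ω => (μ[T | 𝒢]) ω))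
    (hY1int : Integrable Y1 μ)
    (hTYint : Integrable (fun ω => T ω * Y ω) μ)
    (hm1barint : Integrable m1bar μ) :
    ∫ ω, (T ω * Y ω / ebar ω - (T ω - ebar ω) * m1bar ω / ebar ω) ∂μ
      = ∫ ω, Y1 ω ∂μ := by
  have hTint : Integrable T μ := integrable_of_le_condExp hc he_pos
  have hT_bdd : ∀ ω, ‖T ω‖ ≤ 1 := fun ω => by rcases hTbin ω with h | h <;> simp [h]
  have hTY : (fun ω => T ω * Y ω) = fun ω => T ω * Y1 ω :=
    funext fun ω => by rcases hTbin ω with h | h <;> simp [hcons ω, h]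
  have hm1_eq : m1 =ᵐ[μ] μ[Y1 | 𝒢] := by
    rw [hTY] at hTYint hm1
    exact hunconf.ae_eq_condExp_of_condExp_mul hY1int hTint hTYint
      (he_pos.mono fun ω h => (hc.trans_le h).ne') hm1
  have hDR_ae : ∀ᵐ ω ∂μ, m1bar ω = m1 ω ∨ ebar ω = μ[T | 𝒢] ω :=
    hDR.elim (·.mono fun _ => Or.inl) (·.mono fun _ => Or.inr)
  have haipw : μ[fun ω => T ω * Y ω / ebar ω - (T ω - ebar ω) * m1bar ω / ebar ω | 𝒢]
      =ᵐ[μ] m1 := by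
    filter_upwards [condExp_aipw h𝒢 hc hTYint hTint (.of_forall hT_bdd) hm1bar_meas hm1barint
      hebar_meas hebar_pos, hm1, hDR_ae, hebar_pos] with ω hω hm1ω hDRω hebarω
    rw [hω, hm1ω]
    exact aipw_eq_of_or (hc.trans_le hebarω).ne' hDRω
  calc ∫ ω, (T ω * Y ω / ebar ω - (T ω - ebar ω) * m1bar ω / ebar ω) ∂μ
      = ∫ ω, m1 ω ∂μ := by rw [← integral_condExp h𝒢, integral_congr_ae haipw]
    _ = ∫ ω, Y1 ω ∂μ := by rw [integral_congr_ae hm1_eq, integral_condExp h𝒢]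

/-- Population double robustness of the AIPW functional: with true propensity score
`e = E[T|𝒢]` and true outcome regression `m₁` (characterized by `E[TY|𝒢] = m₁ e` a.e.),
and working models `m̄₁, ē` which are `𝒢`-measurable with `ē ≥ c > 0` a.s., if either
`m̄₁ = m₁` a.e. or `ē = e` a.e., then
`E[T·Y/ē(X) − (T − ē(X))·m̄₁(X)/ē(X)] = E[Y(1)]`. -/
theorem stmt_5 {Ω : Type*} {mΩ : MeasurableSpace Ω} [StandardBorelSpace Ω]
    (μ : Measure Ω) [IsProbabilityMeasure μ]
    (𝒢 : MeasurableSpace Ω) (h𝒢 : 𝒢 ≤ mΩ)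
    (Y1 Y0 T Y m1 m1bar ebar : Ω → ℝ) (c : ℝ) (hc : 0 < c)
    (hTbin : ∀ ω, T ω = 0 ∨ T ω = 1)
    (hcons : ∀ ω, Y ω = T ω * Y1 ω + (1 - T ω) * Y0 ω)
    (hunconf : CondIndepFun 𝒢 h𝒢 Y1 T μ)
    (he_pos : ∀ᵐ ω ∂μ, c ≤ (μ[T | 𝒢]) ω)
    (hm1_meas : StronglyMeasurable[𝒢] m1)
    (hm1 : μ[fun ω => T ω * Y ω | 𝒢] =ᵐ[μ] fun ω => m1 ω * (μ[T | 𝒢]) ω)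
    (hm1bar_meas : StronglyMeasurable[𝒢] m1bar)
    (hebar_meas : StronglyMeasurable[𝒢] ebar)
    (hebar_pos : ∀ᵐ ω ∂μ, c ≤ ebar ω)
    (hDR : (m1bar =ᵐ[μ] m1) ∨ (ebar =ᵐ[μ] fun ω => (μ[T | 𝒢]) ω))
    (hY1int : Integrable Y1 μ)
    (hTYint : Integrable (fun ω => T ω * Y ω) μ)
    (hm1int : Integrable m1 μ) (hm1barint : Integrable m1bar μ)
    (hAIPWint : Integrable
      (fun ω => T ω * Y ω / ebar ω - (T ω - ebar ω) * m1bar ω / ebar ω) μ) :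
    ∫ ω, (T ω * Y ω / ebar ω - (T ω - ebar ω) * m1bar ω / ebar ω) ∂μ
      = ∫ ω, Y1 ω ∂μ :=
  stmt_5_general μ 𝒢 h𝒢 Y1 Y0 T Y m1 m1bar ebar c hc hTbin hcons hunconf he_pos hm1 hm1bar_meas
    hebar_meas hebar_pos hDR hY1int hTYint hm1barint
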